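/- arXiv:2503.13634 — 7 statements merged into one kernel-verified Lean document; each statement's English description precedes it below -/
import Mathlib

section
/- Let τ > 0, σ > 1, and define M_0 = 1 and M_p = p^{τ p^σ} for p ≥ 1. Then M_p · M_q ≤ M_{p+q} for all p, q ∈ ℕ. -/
noncomputable def M (τ σ : ℝ) (p : ℕ) : ℝ := if p = 0 then 1 else (p : ℝ) ^ (τ * (p : ℝ) ^ σ)

theorem M_mul_le_M_add (τ σ : ℝ) (hτ : 0 < τ) (hσ : 1 < σ) :
    ∀ p q : ℕ, M τ σ p * M τ σ q ≤ M τ σ (p + q) := by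
  intro p q
  rcases Nat.eq_zero_or_pos p with hp | hp
  · subst hp; simp [M]
  rcases Nat.eq_zero_or_pos q with hq | hq
  · subst hq; simp [M]
  have hp1 : (1 : ℝ) ≤ (p : ℝ) := by exact_mod_cast hp
  have hq1 : (1 : ℝ) ≤ (q : ℝ) := by exact_mod_cast hq
  have hpq1 : (1 : ℝ) ≤ ((p + q : ℕ) : ℝ) := by
    push_cast; linarith
  have hpqpos : (0 : ℝ) < ((p + q : ℕ) : ℝ) := lt_of_lt_of_le one_pos hpq1
  simp only [M, if_neg hp.ne', if_neg hq.ne', if_neg (by omega : p + q ≠ 0)]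
  have h1 : (p : ℝ) ^ (τ * (p : ℝ) ^ σ) ≤ ((p + q : ℕ) : ℝ) ^ (τ * (p : ℝ) ^ σ) := by
    apply Real.rpow_le_rpow (by linarith) (by push_cast; linarith)
    positivity
  have h2 : (q : ℝ) ^ (τ * (q : ℝ) ^ σ) ≤ ((p + q : ℕ) : ℝ) ^ (τ * (q : ℝ) ^ σ) := by
    apply Real.rpow_le_rpow (by linarith) (by push_cast; linarith)
    positivity
  calc (p : ℝ) ^ (τ * (p : ℝ) ^ σ) * (q : ℝ) ^ (τ * (q : ℝ) ^ σ)
      ≤ ((p + q : ℕ) : ℝ) ^ (τ * (p : ℝ) ^ σ) * ((p + q : ℕ) : ℝ) ^ (τ * (q : ℝ) ^ σ) := by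
        apply mul_le_mul h1 h2 (Real.rpow_nonneg (by linarith) _)
        positivity
    _ = ((p + q : ℕ) : ℝ) ^ (τ * (p : ℝ) ^ σ + τ * (q : ℝ) ^ σ) := by
        rw [Real.rpow_add hpqpos]
    _ ≤ ((p + q : ℕ) : ℝ) ^ (τ * ((p + q : ℕ) : ℝ) ^ σ) := by
        apply Real.rpow_le_rpow_of_exponent_le hpq1
        rw [← mul_add]
        apply mul_le_mul_of_nonneg_left _ hτ.le
        push_cast
        have := NNReal.add_rpow_le_rpow_add (p : NNReal) (q : NNReal) hσ.le
        exact_mod_cast this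
end

section
/- Let τ > 0, σ > 1, and define M_0 = 1 and M_p = p^{τ p^σ} for p ≥ 1. Then there is a constant C ≥ 1 such that M_{p+q} ≤ C^{p^σ + q^σ} · N_p · N_q for all p, q ∈ ℕ, where N_p denotes the sequence with parameter τ·2^{σ-1}, i.e., N_p = p^{τ 2^{σ-1} p^σ} (N_0 = 1). -/
lemma add_rpow_le_aux {σ : ℝ} (hσ : 1 ≤ σ) {x y : ℝ} (hx : 0 ≤ x) (hy : 0 ≤ y) :
    (x + y) ^ σ ≤ 2 ^ (σ - 1) * (x ^ σ + y ^ σ) := by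
  have h := (convexOn_rpow hσ).2 (Set.mem_Ici.2 hx) (Set.mem_Ici.2 hy)
    (by norm_num : (0:ℝ) ≤ 1/2) (by norm_num : (0:ℝ) ≤ 1/2) (by norm_num)
  simp only [smul_eq_mul] at h
  have hxy : (1/2 : ℝ) * x + (1/2) * y = (x + y) / 2 := by ring
  rw [hxy] at h
  have h2 : (x + y) ^ σ = 2 ^ σ * ((x + y) / 2) ^ σ := by
    rw [← Real.mul_rpow (by norm_num) (by positivity)]
    congr 1; ring
  rw [h2]
  have h3 : (2:ℝ) ^ σ * ((x + y) / 2) ^ σ ≤ 2 ^ σ * (1/2 * x ^ σ + 1/2 * y ^ σ) :=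
    mul_le_mul_of_nonneg_left h (by positivity)
  refine h3.trans_eq ?_
  have : (2:ℝ) ^ (σ - 1) = 2 ^ σ / 2 := by
    rw [Real.rpow_sub (by norm_num), Real.rpow_one]
  rw [this]; ring

lemma log_div_le {p q : ℝ} (hp : 1 ≤ p) (hpq : p ≤ q) {σ : ℝ} (hσ : 1 ≤ σ) :
    p ^ σ * (Real.log q - Real.log p) ≤ q ^ σ := by
  have hp0 : 0 < p := lt_of_lt_of_le one_pos hp
  have hq0 : 0 < q := lt_of_lt_of_le hp0 hpq
  have h1 : Real.log q - Real.log p = Real.log (q / p) := (Real.log_div hq0.ne' hp0.ne').symm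
  have hqp1 : 1 ≤ q / p := (one_le_div hp0).2 hpq
  have h2 : Real.log (q / p) ≤ q / p - 1 := Real.log_le_sub_one_of_pos (by positivity)
  have h3 : q / p - 1 ≤ q / p := by linarith
  have h4 : q / p ≤ (q / p) ^ σ := by
    calc q / p = (q / p) ^ (1:ℝ) := (Real.rpow_one _).symm
    _ ≤ (q / p) ^ σ := Real.rpow_le_rpow_of_exponent_le hqp1 hσ
  have h5 : (q / p) ^ σ = q ^ σ / p ^ σ := Real.div_rpow hq0.le hp0.le σ
  have hps : (0:ℝ) < p ^ σ := Real.rpow_pos_of_pos hp0 σ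
  calc p ^ σ * (Real.log q - Real.log p) ≤ p ^ σ * (q ^ σ / p ^ σ) := by
        rw [h1]
        exact mul_le_mul_of_nonneg_left ((h2.trans h3).trans (h4.trans_eq h5)) hps.le
    _ = q ^ σ := by field_simp

-- main case: 1 ≤ p ≤ q
lemma key (τ σ : ℝ) (hτ : 0 < τ) (hσ : 1 < σ) {p q : ℕ} (hp : 1 ≤ p) (hpq : p ≤ q) :
    M τ σ (p + q) ≤
      ((2 * Real.exp 1) ^ (τ * 2 ^ (σ - 1))) ^ ((p : ℝ) ^ σ + (q : ℝ) ^ σ)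
        * M (τ * 2 ^ (σ - 1)) σ p * M (τ * 2 ^ (σ - 1)) σ q := by
  set a : ℝ := τ * 2 ^ (σ - 1) with ha
  have h2σ : (0:ℝ) < 2 ^ (σ - 1) := Real.rpow_pos_of_pos (by norm_num) _
  have ha0 : 0 < a := mul_pos hτ h2σ
  have hp1 : (1:ℝ) ≤ (p:ℝ) := by exact_mod_cast hp
  have hpq' : (p:ℝ) ≤ (q:ℝ) := by exact_mod_cast hpq
  have hq1 : (1:ℝ) ≤ (q:ℝ) := hp1.trans hpq'
  have hp0 : (0:ℝ) < p := lt_of_lt_of_le one_pos hp1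
  have hq0 : (0:ℝ) < q := lt_of_lt_of_le one_pos hq1
  have hpσ : (0:ℝ) ≤ (p:ℝ) ^ σ := (Real.rpow_pos_of_pos hp0 σ).le
  have hqσ : (0:ℝ) ≤ (q:ℝ) ^ σ := (Real.rpow_pos_of_pos hq0 σ).le
  set E : ℝ := a * ((p:ℝ) ^ σ + (q:ℝ) ^ σ) with hE
  have hE0 : 0 ≤ E := by positivity
  have hMpq : M τ σ (p + q) = ((p:ℝ) + q) ^ (τ * ((p:ℝ) + q) ^ σ) := by
    unfold M
    rw [if_neg (by omega)]
    push_cast; ring_nf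
  -- step 1
  have step1 : M τ σ (p + q) ≤ ((p:ℝ) + q) ^ E := by
    rw [hMpq]
    apply Real.rpow_le_rpow_of_exponent_le (by linarith)
    rw [hE]
    calc τ * ((p:ℝ) + q) ^ σ ≤ τ * (2 ^ (σ - 1) * ((p:ℝ) ^ σ + (q:ℝ) ^ σ)) :=
          mul_le_mul_of_nonneg_left (add_rpow_le_aux hσ.le hp0.le hq0.le) hτ.le
      _ = a * ((p:ℝ) ^ σ + (q:ℝ) ^ σ) := by ring
  -- step 2
  have step2 : ((p:ℝ) + q) ^ E ≤ (2 * q) ^ E :=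
    Real.rpow_le_rpow (by linarith) (by linarith) hE0
  -- step 3 : (2q)^E = 2^E * q^{a p^σ} * q^{a q^σ}
  have step3 : ((2:ℝ) * q) ^ E = 2 ^ E * ((q:ℝ) ^ (a * (p:ℝ) ^ σ) * (q:ℝ) ^ (a * (q:ℝ) ^ σ)) := by
    rw [Real.mul_rpow (by norm_num) hq0.le, ← Real.rpow_add hq0]
    congr 1
    rw [hE]; ring
  -- step 4 : q^{a p^σ} ≤ exp(a q^σ) * p^{a p^σ}
  have step4 : (q:ℝ) ^ (a * (p:ℝ) ^ σ) ≤ Real.exp (a * (q:ℝ) ^ σ) * (p:ℝ) ^ (a * (p:ℝ) ^ σ) := by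
    rw [← Real.exp_log (show (0:ℝ) < (q:ℝ) ^ (a * (p:ℝ) ^ σ) from Real.rpow_pos_of_pos hq0 _),
      ← Real.exp_log (show (0:ℝ) < (p:ℝ) ^ (a * (p:ℝ) ^ σ) from Real.rpow_pos_of_pos hp0 _),
      ← Real.exp_add]
    apply Real.exp_le_exp.2
    rw [Real.log_rpow hq0, Real.log_rpow hp0]
    have := log_div_le hp1 hpq' hσ.le
    nlinarith [ha0.le]
  -- assemble
  have hNp : M a σ p = (p:ℝ) ^ (a * (p:ℝ) ^ σ) := by
    unfold M; rw [if_neg (by omega)]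
  have hNq : M a σ q = (q:ℝ) ^ (a * (q:ℝ) ^ σ) := by
    unfold M; rw [if_neg (by omega)]
  have hC : ((2 * Real.exp 1) ^ a) ^ ((p : ℝ) ^ σ + (q : ℝ) ^ σ)
      = 2 ^ E * Real.exp E := by
    rw [← Real.rpow_mul (by positivity), ← hE,
      Real.mul_rpow (by norm_num) (Real.exp_pos 1).le, ← Real.exp_one_rpow E]
  have hexp : Real.exp (a * (q:ℝ) ^ σ) ≤ Real.exp E := by
    apply Real.exp_le_exp.2
    rw [hE]; nlinarith [ha0.le]
  calc M τ σ (p + q) ≤ ((p:ℝ) + q) ^ E := step1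
    _ ≤ (2 * q) ^ E := step2
    _ = 2 ^ E * ((q:ℝ) ^ (a * (p:ℝ) ^ σ) * (q:ℝ) ^ (a * (q:ℝ) ^ σ)) := step3
    _ ≤ 2 ^ E * ((Real.exp (a * (q:ℝ) ^ σ) * (p:ℝ) ^ (a * (p:ℝ) ^ σ)) * (q:ℝ) ^ (a * (q:ℝ) ^ σ)) := by
        apply mul_le_mul_of_nonneg_left _ (by positivity)
        exact mul_le_mul_of_nonneg_right step4 (by positivity)
    _ ≤ 2 ^ E * ((Real.exp E * (p:ℝ) ^ (a * (p:ℝ) ^ σ)) * (q:ℝ) ^ (a * (q:ℝ) ^ σ)) := by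
        apply mul_le_mul_of_nonneg_left _ (by positivity)
        apply mul_le_mul_of_nonneg_right _ (by positivity)
        exact mul_le_mul_of_nonneg_right hexp (by positivity)
    _ = ((2 * Real.exp 1) ^ a) ^ ((p : ℝ) ^ σ + (q : ℝ) ^ σ) * M a σ p * M a σ q := by
        rw [hC, hNp, hNq]; ring

lemma M_le_N (τ σ : ℝ) (hτ : 0 < τ) (hσ : 1 < σ) (q : ℕ) :
    M τ σ q ≤ M (τ * 2 ^ (σ - 1)) σ q := by
  unfold M
  split
  · exact le_refl 1
  · rename_i hq
    have hq1 : (1:ℝ) ≤ (q:ℝ) := by exact_mod_cast Nat.one_le_iff_ne_zero.2 hq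
    apply Real.rpow_le_rpow_of_exponent_le hq1
    have h2 : (1:ℝ) ≤ 2 ^ (σ - 1) :=
      Real.one_le_rpow (by norm_num) (by linarith)
    have hqσ : (0:ℝ) ≤ (q:ℝ) ^ σ := Real.rpow_nonneg (by positivity) σ
    nlinarith [mul_nonneg (mul_nonneg hτ.le hqσ) (sub_nonneg.2 h2)]

theorem M_add_le (τ σ : ℝ) (hτ : 0 < τ) (hσ : 1 < σ) :
    ∃ C : ℝ, 1 ≤ C ∧ ∀ p q : ℕ,
      M τ σ (p + q) ≤
        C ^ ((p : ℝ) ^ σ + (q : ℝ) ^ σ) * M (τ * 2 ^ (σ - 1)) σ p * M (τ * 2 ^ (σ - 1)) σ q := by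
  have h2σ : (0:ℝ) < 2 ^ (σ - 1) := Real.rpow_pos_of_pos (by norm_num) _
  have ha0 : 0 < τ * 2 ^ (σ - 1) := mul_pos hτ h2σ
  have hbase : (1:ℝ) ≤ 2 * Real.exp 1 := by nlinarith [Real.add_one_le_exp 1]
  refine ⟨(2 * Real.exp 1) ^ (τ * 2 ^ (σ - 1)), ?_, ?_⟩
  · exact Real.one_le_rpow hbase ha0.le
  · have hC1 : (1:ℝ) ≤ (2 * Real.exp 1) ^ (τ * 2 ^ (σ - 1)) :=
      Real.one_le_rpow hbase ha0.le
    intro p q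
    have hN0 : ∀ r : ℕ, 0 ≤ M (τ * 2 ^ (σ - 1)) σ r := by
      intro r; unfold M; split
      · norm_num
      · positivity
    rcases Nat.eq_zero_or_pos p with hp | hp
    · subst hp
      calc M τ σ (0 + q) = M τ σ q := by rw [Nat.zero_add]
        _ ≤ M (τ * 2 ^ (σ - 1)) σ q := M_le_N τ σ hτ hσ q
        _ ≤ ((2 * Real.exp 1) ^ (τ * 2 ^ (σ - 1))) ^ (((0:ℕ) : ℝ) ^ σ + (q:ℝ) ^ σ)
              * M (τ * 2 ^ (σ - 1)) σ 0 * M (τ * 2 ^ (σ - 1)) σ q := by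
            have h1 : M (τ * 2 ^ (σ - 1)) σ 0 = 1 := by unfold M; simp
            rw [h1, mul_one]
            have : (1:ℝ) ≤ ((2 * Real.exp 1) ^ (τ * 2 ^ (σ - 1))) ^ (((0:ℕ):ℝ) ^ σ + (q:ℝ) ^ σ) :=
              Real.one_le_rpow hC1 (by positivity)
            nlinarith [hN0 q]
    rcases Nat.eq_zero_or_pos q with hq | hq
    · subst hq
      calc M τ σ (p + 0) = M τ σ p := by rw [Nat.add_zero]
        _ ≤ M (τ * 2 ^ (σ - 1)) σ p := M_le_N τ σ hτ hσ p
        _ ≤ ((2 * Real.exp 1) ^ (τ * 2 ^ (σ - 1))) ^ ((p:ℝ) ^ σ + ((0:ℕ):ℝ) ^ σ)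
              * M (τ * 2 ^ (σ - 1)) σ p * M (τ * 2 ^ (σ - 1)) σ 0 := by
            have h1 : M (τ * 2 ^ (σ - 1)) σ 0 = 1 := by unfold M; simp
            rw [h1, mul_one]
            have : (1:ℝ) ≤ ((2 * Real.exp 1) ^ (τ * 2 ^ (σ - 1))) ^ ((p:ℝ) ^ σ + ((0:ℕ):ℝ) ^ σ) :=
              Real.one_le_rpow hC1 (by positivity)
            nlinarith [hN0 p]
    rcases le_total p q with hpq | hqp
    · exact key τ σ hτ hσ hp hpq
    · have h := key τ σ hτ hσ hq hqp
      rw [Nat.add_comm q p] at h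
      calc M τ σ (p + q)
          ≤ ((2 * Real.exp 1) ^ (τ * 2 ^ (σ - 1))) ^ ((q:ℝ) ^ σ + (p:ℝ) ^ σ)
              * M (τ * 2 ^ (σ - 1)) σ q * M (τ * 2 ^ (σ - 1)) σ p := h
        _ = ((2 * Real.exp 1) ^ (τ * 2 ^ (σ - 1))) ^ ((p:ℝ) ^ σ + (q:ℝ) ^ σ)
              * M (τ * 2 ^ (σ - 1)) σ p * M (τ * 2 ^ (σ - 1)) σ q := by
            rw [add_comm ((q:ℝ) ^ σ)]; ring
end

section
/- Let τ > 0, σ > 1, and define M_0 = 1 and M_p = p^{τ p^σ} for p ≥ 1. Then for all p ≥ 1, M_{p-1}/M_p ≤ 1/(2p)^{τ (p-1)^{σ-1}}. -/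
/-- Key inequality: `log 2 + y * log y ≤ y * log (y+1)` for `y ≥ 1`. -/
lemma key_log (y : ℝ) (hy : 1 ≤ y) :
    Real.log 2 + y * Real.log y ≤ y * Real.log (y + 1) := by
  have hy0 : 0 < y := by linarith
  have hb : (2 : ℝ) ≤ (1 + 1 / y) ^ y := by
    have hneg : (-1 : ℝ) ≤ 1 / y := by
      have := le_of_lt (one_div_pos.mpr hy0)
      linarith
    have := one_add_mul_self_le_rpow_one_add (s := 1 / y) hneg hy
    have hyy : y * (1 / y) = 1 := by field_simp
    calc (2 : ℝ) = 1 + y * (1 / y) := by rw [hyy]; norm_num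
      _ ≤ (1 + 1 / y) ^ y := this
  have h1y : (0 : ℝ) < 1 + 1 / y := by positivity
  have hlog : Real.log 2 ≤ y * Real.log (1 + 1 / y) := by
    calc Real.log 2 ≤ Real.log ((1 + 1 / y) ^ y) := Real.log_le_log two_pos hb
      _ = y * Real.log (1 + 1 / y) := Real.log_rpow h1y y
  have heq : Real.log (1 + 1 / y) = Real.log (y + 1) - Real.log y := by
    rw [show 1 + 1 / y = (y + 1) / y by field_simp]
    exact Real.log_div (by linarith) (ne_of_gt hy0)
  rw [heq] at hlog
  nlinarith [hlog]

theorem ratio_bound (τ σ : ℝ) (hτ : 0 < τ) (hσ : 1 < σ) :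
    ∀ p : ℕ, 1 ≤ p →
      M τ σ (p - 1) / M τ σ p ≤ 1 / (2 * (p : ℝ)) ^ (τ * ((p : ℝ) - 1) ^ (σ - 1)) := by
  intro p hp
  rcases eq_or_lt_of_le hp with h1 | h2
  · -- p = 1
    have hp1 : p = 1 := h1.symm
    subst hp1
    norm_num [M, Real.zero_rpow (show σ - 1 ≠ 0 by linarith)]
  · -- p ≥ 2
    have hp2 : 2 ≤ p := h2
    have hpne : p ≠ 0 := by omega
    have hpm1ne : p - 1 ≠ 0 := by omega
    simp only [M, if_neg hpne, if_neg hpm1ne]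
    have hcast : ((p - 1 : ℕ) : ℝ) = (p : ℝ) - 1 := by
      have : (1 : ℕ) ≤ p := hp
      push_cast [this]
      ring
    rw [hcast]
    set x : ℝ := (p : ℝ) with hx
    set y : ℝ := x - 1 with hyd
    have hx2 : (2 : ℝ) ≤ x := by rw [hx]; exact_mod_cast hp2
    have hy1 : (1 : ℝ) ≤ y := by simp [hyd]; linarith
    have hy0 : (0 : ℝ) < y := by linarith
    have hx0 : (0 : ℝ) < x := by linarith
    have h2x0 : (0 : ℝ) < 2 * x := by linarith
    rw [div_le_div_iff₀ (Real.rpow_pos_of_pos hx0 _) (Real.rpow_pos_of_pos h2x0 _),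
      one_mul]
    rw [Real.rpow_def_of_pos hy0, Real.rpow_def_of_pos h2x0, Real.rpow_def_of_pos hx0,
      ← Real.exp_add, Real.exp_le_exp]
    -- goal: log y * (τ * y^σ) + log (2x) * (τ * y^(σ-1)) ≤ log x * (τ * x^σ)
    have hys : y ^ σ = y ^ (σ - 1) * y := by
      rw [show σ = (σ - 1) + 1 by ring, Real.rpow_add hy0, Real.rpow_one]
      ring_nf
    have hxs : x ^ σ = x ^ (σ - 1) * x := by
      rw [show σ = (σ - 1) + 1 by ring, Real.rpow_add hx0, Real.rpow_one]
      ring_nf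
    rw [hys, hxs]
    have hA : (0 : ℝ) < y ^ (σ - 1) := Real.rpow_pos_of_pos hy0 _
    have hAB : y ^ (σ - 1) ≤ x ^ (σ - 1) :=
      Real.rpow_le_rpow (le_of_lt hy0) (by linarith) (by linarith)
    -- key: y * log y + log (2x) ≤ x * log x
    have hkey : y * Real.log y + Real.log (2 * x) ≤ x * Real.log x := by
      have h1 := key_log y hy1
      have hxy : y + 1 = x := by simp [hyd]
      rw [hxy] at h1
      have h2x : Real.log (2 * x) = Real.log 2 + Real.log x := by
        rw [Real.log_mul (by norm_num) (ne_of_gt hx0)]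
      rw [h2x]
      have h3 : y * Real.log x + Real.log x = x * Real.log x := by rw [← hxy]; ring
      linarith
    have hlogy : (0 : ℝ) ≤ Real.log y := Real.log_nonneg hy1
    have hlog2x : (0 : ℝ) ≤ Real.log (2 * x) := Real.log_nonneg (by linarith)
    have hpos : (0 : ℝ) ≤ y * Real.log y + Real.log (2 * x) := by positivity
    have hlogx : (0 : ℝ) ≤ Real.log x := Real.log_nonneg (by linarith)
    calc Real.log y * (τ * (y ^ (σ - 1) * y)) + Real.log (2 * x) * (τ * y ^ (σ - 1))
        = τ * y ^ (σ - 1) * (y * Real.log y + Real.log (2 * x)) := by ring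
      _ ≤ τ * x ^ (σ - 1) * (y * Real.log y + Real.log (2 * x)) := by
          apply mul_le_mul_of_nonneg_right _ hpos
          exact mul_le_mul_of_nonneg_left hAB (le_of_lt hτ)
      _ ≤ τ * x ^ (σ - 1) * (x * Real.log x) := by
          apply mul_le_mul_of_nonneg_left hkey
          positivity
      _ = Real.log x * (τ * (x ^ (σ - 1) * x)) := by ring
end

section
/- Let τ > 0, σ > 1, and define M_0 = 1 and M_p = p^{τ p^σ} for p ≥ 1. Then the series ∑_{p=1}^∞ M_{p-1}/M_p converges. -/
theorem summable_ratio (τ σ : ℝ) (hτ : 0 < τ) (hσ : 1 < σ) :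
    Summable (fun p : ℕ => M τ σ p / M τ σ (p + 1)) := by
  have hσ0 : 0 < σ - 1 := by linarith
  have htend : Filter.Tendsto (fun p : ℕ => (p : ℝ) ^ (σ - 1)) Filter.atTop Filter.atTop :=
    (tendsto_rpow_atTop hσ0).comp tendsto_natCast_atTop_atTop
  have hsum : Summable (fun p : ℕ => 1 / (p : ℝ) ^ (2 : ℝ)) :=
    (Real.summable_one_div_nat_rpow).mpr (by norm_num)
  refine summable_of_isBigO_nat hsum (Asymptotics.IsBigO.of_bound 1 ?_)
  filter_upwards [htend.eventually_ge_atTop (2 / τ), Filter.eventually_ge_atTop 1]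
    with p hp hp1
  set a : ℝ := (p : ℝ) with ha
  have ha1 : (1 : ℝ) ≤ a := by exact_mod_cast Nat.one_le_cast.mpr hp1
  have ha0 : (0 : ℝ) < a := by linarith
  have hMp : M τ σ p = a ^ (τ * a ^ σ) := by
    simp [M, Nat.one_le_iff_ne_zero.mp hp1, ha]
  have hMp1 : M τ σ (p + 1) = (a + 1) ^ (τ * (a + 1) ^ σ) := by
    simp [M, ha]
  -- key exponent inequality : τ * (a+1)^σ - τ * a^σ ≥ 2
  have hpow : a ^ σ + a ^ (σ - 1) ≤ (a + 1) ^ σ := by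
    have h1 : (a + 1) ^ σ = (a + 1) * (a + 1) ^ (σ - 1) := by
      rw [← Real.rpow_one_add' (by linarith) (by linarith)]
      ring_nf
    have h2 : a ^ (σ - 1) ≤ (a + 1) ^ (σ - 1) :=
      Real.rpow_le_rpow (by linarith) (by linarith) (by linarith)
    have h3 : a * a ^ (σ - 1) = a ^ σ := by
      rw [← Real.rpow_one_add' (by linarith) (by linarith)]
      ring_nf
    calc a ^ σ + a ^ (σ - 1) = (a + 1) * a ^ (σ - 1) := by rw [← h3]; ring
      _ ≤ (a + 1) * (a + 1) ^ (σ - 1) := by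
          have : (0 : ℝ) ≤ a + 1 := by linarith
          nlinarith [Real.rpow_nonneg (le_of_lt ha0) (σ - 1)]
      _ = (a + 1) ^ σ := h1.symm
  have hgap : (2 : ℝ) ≤ τ * a ^ (σ - 1) := by
    have : 2 / τ * τ ≤ a ^ (σ - 1) * τ := by
      exact mul_le_mul_of_nonneg_right hp (le_of_lt hτ)
    rw [div_mul_cancel₀ _ (ne_of_gt hτ)] at this
    linarith
  have hexp : τ * a ^ σ - τ * (a + 1) ^ σ ≤ -2 := by nlinarith
  -- bound the ratio
  have hnum : a ^ (τ * a ^ σ) ≤ (a + 1) ^ (τ * a ^ σ) :=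
    Real.rpow_le_rpow (le_of_lt ha0) (by linarith)
      (by positivity)
  have hden : (0 : ℝ) < (a + 1) ^ (τ * (a + 1) ^ σ) := Real.rpow_pos_of_pos (by linarith) _
  have hstep : M τ σ p / M τ σ (p + 1) ≤ (a + 1) ^ (τ * a ^ σ - τ * (a + 1) ^ σ) := by
    rw [hMp, hMp1, Real.rpow_sub (by linarith)]
    gcongr
  have hstep2 : (a + 1) ^ (τ * a ^ σ - τ * (a + 1) ^ σ) ≤ (a + 1) ^ (-(2 : ℝ)) :=
    Real.rpow_le_rpow_of_exponent_le (by linarith) (by linarith)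
  have hstep3 : (a + 1) ^ (-(2 : ℝ)) ≤ 1 / a ^ (2 : ℝ) := by
    rw [Real.rpow_neg (by linarith), inv_eq_one_div]
    apply div_le_div_of_nonneg_left one_pos.le (Real.rpow_pos_of_pos ha0 _)
      (Real.rpow_le_rpow (le_of_lt ha0) (by linarith) (by norm_num))
  have hnn : 0 ≤ M τ σ p / M τ σ (p + 1) := by
    rw [hMp, hMp1]
    positivity
  rw [Real.norm_eq_abs, Real.norm_eq_abs, abs_of_nonneg hnn, abs_of_nonneg (by positivity), one_mul]
  calc M τ σ p / M τ σ (p + 1) ≤ _ := hstep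
    _ ≤ _ := hstep2
    _ ≤ _ := hstep3
end

section
/- Let τ > 0, σ > 1, and M_p = p^{τ p^σ} for p ≥ 1, M_0 = 1. Then there is a constant C > 0 such that (M_p/p!)^{1/p} ≤ C (M_q/q!)^{1/q} whenever 1 ≤ p ≤ q, i.e., the sequence ((M_p/p!)^{1/p}) is almost increasing. -/
open Real

lemma pow_self_le_exp_mul_factorial (n : ℕ) :
    (n : ℝ) ^ n ≤ Real.exp n * n.factorial := by
  induction n with
  | zero => simp
  | succ n ih =>
    rcases Nat.eq_zero_or_pos n with rfl | hn
    · simpa using Real.one_le_exp (by norm_num)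
    have hn0 : (0:ℝ) < n := by exact_mod_cast hn
    have h1 : (1 + 1 / (n:ℝ)) ^ n ≤ Real.exp 1 := by
      have := Real.add_one_le_exp (1 / (n:ℝ))
      calc (1 + 1 / (n:ℝ)) ^ n ≤ (Real.exp (1 / n)) ^ n := by
            apply pow_le_pow_left₀ (by positivity) (by linarith)
        _ = Real.exp 1 := by
            rw [← Real.exp_nat_mul]
            congr 1
            field_simp
    have key : ((n:ℝ) + 1) ^ n ≤ Real.exp (n + 1) * n.factorial := by
      have heq : ((n:ℝ) + 1) ^ n = (n:ℝ) ^ n * (1 + 1 / (n:ℝ)) ^ n := by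
        rw [← mul_pow]; congr 1; field_simp
      calc ((n:ℝ) + 1) ^ n = (n:ℝ) ^ n * (1 + 1 / (n:ℝ)) ^ n := heq
        _ ≤ (Real.exp n * n.factorial) * Real.exp 1 := by
            apply mul_le_mul ih h1 (by positivity) (by positivity)
        _ = Real.exp (n + 1) * n.factorial := by rw [Real.exp_add]; ring
    calc ((n + 1 : ℕ) : ℝ) ^ (n + 1) = ((n:ℝ) + 1) * ((n:ℝ) + 1) ^ n := by
          push_cast; ring
      _ ≤ ((n:ℝ) + 1) * (Real.exp (n + 1) * n.factorial) := by
          apply mul_le_mul_of_nonneg_left key (by positivity)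
      _ = Real.exp (((n:ℕ) + 1 : ℕ)) * ((n + 1).factorial : ℝ) := by
          rw [Nat.factorial_succ]; push_cast; ring

lemma log_factorial_lb (n : ℕ) (hn : 1 ≤ n) :
    (n : ℝ) * Real.log n - n ≤ Real.log n.factorial := by
  have hn0 : (0:ℝ) < n := by exact_mod_cast hn
  have hf : (0:ℝ) < n.factorial := by exact_mod_cast n.factorial_pos
  have := Real.log_le_log (by positivity) (pow_self_le_exp_mul_factorial n)
  rw [Real.log_pow, Real.log_mul (Real.exp_ne_zero _) hf.ne', Real.log_exp] at this
  linarith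

lemma log_factorial_ub (n : ℕ) :
    Real.log n.factorial ≤ (n : ℝ) * Real.log n := by
  rcases Nat.eq_zero_or_pos n with rfl | hn
  · simp
  have hf : (0:ℝ) < n.factorial := by exact_mod_cast n.factorial_pos
  have h : (n.factorial : ℝ) ≤ (n:ℝ) ^ n := by exact_mod_cast n.factorial_le_pow
  have := Real.log_le_log hf h
  rwa [Real.log_pow] at this

theorem almost_increasing (τ σ : ℝ) (hτ : 0 < τ) (hσ : 1 < σ) :
    ∃ C : ℝ, 0 < C ∧ ∀ p q : ℕ, 1 ≤ p → p ≤ q →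
      (M τ σ p / (Nat.factorial p : ℝ)) ^ ((p : ℝ)⁻¹) ≤
        C * (M τ σ q / (Nat.factorial q : ℝ)) ^ ((q : ℝ)⁻¹) := by
  have hs : (0:ℝ) < σ - 1 := by linarith
  set s : ℝ := σ - 1 with hsdef
  set N : ℕ := max 1 ⌈(τ⁻¹) ^ (s⁻¹)⌉₊ with hNdef
  have hN1 : 1 ≤ N := le_max_left _ _
  have hNR : (1:ℝ) ≤ N := by exact_mod_cast hN1
  have hN0 : (0:ℝ) < N := by linarith
  have hNτ : 1 ≤ τ * (N:ℝ) ^ s := by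
    have h1 : (τ⁻¹) ^ (s⁻¹) ≤ (N:ℝ) := by
      refine le_trans (Nat.le_ceil _) ?_
      exact_mod_cast Nat.cast_le.mpr (le_max_right 1 ⌈(τ⁻¹) ^ (s⁻¹)⌉₊)
    have h2 : ((τ⁻¹) ^ (s⁻¹)) ^ s ≤ (N:ℝ) ^ s :=
      Real.rpow_le_rpow (by positivity) h1 hs.le
    rw [← Real.rpow_mul (by positivity), inv_mul_cancel₀ hs.ne', Real.rpow_one] at h2
    calc (1:ℝ) = τ * τ⁻¹ := (mul_inv_cancel₀ hτ.ne').symm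
      _ ≤ τ * (N:ℝ) ^ s := mul_le_mul_of_nonneg_left h2 hτ.le
  set K0 : ℝ := τ * (N:ℝ) ^ s * Real.log N + Real.log N with hK0def
  have hlogN : 0 ≤ Real.log N := Real.log_nonneg hNR
  refine ⟨Real.exp (K0 + 1), Real.exp_pos _, ?_⟩
  intro p q hp hpq
  have hq : 1 ≤ q := le_trans hp hpq
  have hp0 : (0:ℝ) < p := by exact_mod_cast hp
  have hq0 : (0:ℝ) < q := by exact_mod_cast hq
  have hp1 : (1:ℝ) ≤ p := by exact_mod_cast hp
  have hq1 : (1:ℝ) ≤ q := by exact_mod_cast hq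
  have hpq' : (p:ℝ) ≤ q := by exact_mod_cast hpq
  have hfp : (0:ℝ) < p.factorial := by exact_mod_cast p.factorial_pos
  have hfq : (0:ℝ) < q.factorial := by exact_mod_cast q.factorial_pos
  have hMpos : ∀ n : ℕ, 1 ≤ n → 0 < M τ σ n / n.factorial := by
    intro n hn
    have hn0 : (0:ℝ) < n := by exact_mod_cast hn
    have hfn : (0:ℝ) < n.factorial := by exact_mod_cast n.factorial_pos
    rw [M, if_neg (by omega)]
    exact div_pos (Real.rpow_pos_of_pos hn0 _) hfn
  have hlogM : ∀ n : ℕ, 1 ≤ n → Real.log (M τ σ n / n.factorial)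
      = τ * (n:ℝ) ^ σ * Real.log n - Real.log n.factorial := by
    intro n hn
    have hn0 : (0:ℝ) < n := by exact_mod_cast hn
    have hfn : (0:ℝ) < n.factorial := by exact_mod_cast n.factorial_pos
    rw [M, if_neg (by omega), Real.log_div (Real.rpow_pos_of_pos hn0 _).ne' hfn.ne',
      Real.log_rpow hn0]
  have hA : ∀ n : ℕ, 1 ≤ n →
      τ * (n:ℝ) ^ σ * Real.log n * (n:ℝ)⁻¹ = τ * (n:ℝ) ^ s * Real.log n := by
    intro n hn
    have hn0 : (0:ℝ) < n := by exact_mod_cast hn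
    have e : (n:ℝ) ^ s = (n:ℝ) ^ σ / n := Real.rpow_sub_one hn0.ne' σ
    rw [e]; field_simp
  have mono : ∀ a b : ℕ, 1 ≤ a → a ≤ b →
      (a:ℝ) ^ s * Real.log a ≤ (b:ℝ) ^ s * Real.log b := by
    intro a b ha hab
    have ha1 : (1:ℝ) ≤ a := by exact_mod_cast ha
    have ha0 : (0:ℝ) < a := by linarith
    have hab' : (a:ℝ) ≤ b := by exact_mod_cast hab
    exact mul_le_mul (Real.rpow_le_rpow ha0.le hab' hs.le)
      (Real.log_le_log ha0 hab') (Real.log_nonneg ha1)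
      (Real.rpow_nonneg (by linarith) _)
  have claim : τ * (p:ℝ) ^ s * Real.log p - Real.log p
      ≤ K0 + (τ * (q:ℝ) ^ s * Real.log q - Real.log q) := by
    have hτqs : 0 ≤ τ * (q:ℝ) ^ s * Real.log q :=
      mul_nonneg (mul_nonneg hτ.le (Real.rpow_nonneg hq0.le _)) (Real.log_nonneg hq1)
    by_cases hpN : N ≤ p
    · have hqN : N ≤ q := le_trans hpN hpq
      have hNp' : (N:ℝ) ≤ p := by exact_mod_cast hpN
      have hNq' : (N:ℝ) ≤ q := by exact_mod_cast hqN
      have h1 : τ * (N:ℝ) ^ s ≤ τ * (p:ℝ) ^ s :=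
        mul_le_mul_of_nonneg_left (Real.rpow_le_rpow hN0.le hNp' hs.le) hτ.le
      have h2 : τ * (p:ℝ) ^ s ≤ τ * (q:ℝ) ^ s :=
        mul_le_mul_of_nonneg_left (Real.rpow_le_rpow hp0.le hpq' hs.le) hτ.le
      have h3 : Real.log p ≤ Real.log q := Real.log_le_log hp0 hpq'
      have h4 : 0 ≤ Real.log p := Real.log_nonneg hp1
      have h5 : (τ * (p:ℝ) ^ s - 1) * Real.log p ≤ (τ * (q:ℝ) ^ s - 1) * Real.log q :=
        mul_le_mul (by linarith) h3 h4 (by linarith)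
      have hK0nn : 0 ≤ K0 := by
        have : 0 ≤ τ * (N:ℝ) ^ s * Real.log N :=
          mul_nonneg (by linarith) hlogN
        rw [hK0def]; linarith
      nlinarith [h5]
    · push_neg at hpN
      have hpN' : p ≤ N := hpN.le
      have hb1 : τ * ((p:ℝ) ^ s * Real.log p) ≤ τ * ((N:ℝ) ^ s * Real.log N) :=
        mul_le_mul_of_nonneg_left (mono p N hp hpN') hτ.le
      have hlogp : 0 ≤ Real.log p := Real.log_nonneg hp1
      have hcore : Real.log q - Real.log N ≤ τ * (q:ℝ) ^ s * Real.log q := by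
        by_cases hqN : q ≤ N
        · have : Real.log q ≤ Real.log N :=
            Real.log_le_log hq0 (by exact_mod_cast hqN)
          linarith
        · push_neg at hqN
          have hNq' : (N:ℝ) ≤ q := by exact_mod_cast hqN.le
          have h1 : 1 ≤ τ * (q:ℝ) ^ s :=
            le_trans hNτ (mul_le_mul_of_nonneg_left
              (Real.rpow_le_rpow hN0.le hNq' hs.le) hτ.le)
          have hlq : 0 ≤ Real.log q := Real.log_nonneg hq1
          nlinarith
      rw [hK0def]; nlinarith [hb1]
  have lb_p : Real.log p - 1 ≤ Real.log p.factorial * (p:ℝ)⁻¹ := by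
    have h := log_factorial_lb p hp
    have h2 := mul_le_mul_of_nonneg_right h (inv_nonneg.mpr hp0.le)
    have e : ((p:ℝ) * Real.log p - p) * (p:ℝ)⁻¹ = Real.log p - 1 := by
      field_simp
    linarith [e ▸ h2]
  have ub_q : Real.log q.factorial * (q:ℝ)⁻¹ ≤ Real.log q := by
    have h := log_factorial_ub q
    have h2 := mul_le_mul_of_nonneg_right h (inv_nonneg.mpr hq0.le)
    have e : ((q:ℝ) * Real.log q) * (q:ℝ)⁻¹ = Real.log q := by
      field_simp
    linarith [e ▸ h2]
  rw [Real.rpow_def_of_pos (hMpos p hp), Real.rpow_def_of_pos (hMpos q hq),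
    ← Real.exp_add, Real.exp_le_exp, hlogM p hp, hlogM q hq, sub_mul, sub_mul]
  have eAp := hA p hp
  have eAq := hA q hq
  linarith [claim, lb_p, ub_q, eAp, eAq]
end

section
/- Let τ > 0, σ > 1, and M_p = p^{τ p^σ} for p ≥ 1, M_0 = 1. Then there exist constants C, h > 0 such that M_{p+1}^{τ,σ} ≤ C h^p M_p^{2τ,σ} for all p ∈ ℕ. -/
lemma M_nonneg (τ σ : ℝ) (p : ℕ) : 0 ≤ M τ σ p := by
  unfold M; split
  · norm_num
  · positivity

lemma M_one_le (τ σ : ℝ) (hτ : 0 ≤ τ) (hσ : 0 < σ) (p : ℕ) : 1 ≤ M τ σ p := by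
  unfold M; split
  · norm_num
  · rename_i hp
    have hp1 : (1:ℝ) ≤ (p:ℝ) := by exact_mod_cast Nat.one_le_iff_ne_zero.mpr hp
    apply Real.one_le_rpow hp1
    positivity

lemma tail_bound (τ σ : ℝ) (hτ : 0 < τ) (hσ : 1 < σ) (p : ℕ) (hp4 : (4:ℝ) ≤ (p:ℕ))
    (hps : 4 * σ ≤ (p:ℝ)) : M τ σ (p + 1) ≤ M (2 * τ) σ p := by
  have hσ0 : 0 < σ := lt_trans one_pos hσ
  have hp0 : (0:ℝ) < (p:ℝ) := lt_of_lt_of_le (by norm_num) hp4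
  have hppos : 0 < p := by exact_mod_cast hp0
  have hpne : p ≠ 0 := hppos.ne'
  unfold M
  rw [if_neg (by omega), if_neg hpne]
  push_cast
  set x : ℝ := (p:ℝ) with hx
  have hx1 : (1:ℝ) ≤ x := le_trans (by norm_num) hp4
  have hlogx : 0 ≤ Real.log x := Real.log_nonneg hx1
  -- log (x+1) ≤ 3/2 * log x
  have hsqrt : (2:ℝ) ≤ x ^ (1/2 : ℝ) := by
    have : (4:ℝ) ^ (1/2 : ℝ) ≤ x ^ (1/2 : ℝ) :=
      Real.rpow_le_rpow (by norm_num) hp4 (by norm_num)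
    calc (2:ℝ) = (4:ℝ) ^ (1/2 : ℝ) := by
          rw [show (4:ℝ) = 2^(2:ℕ) by norm_num, ← Real.rpow_natCast 2 2,
            ← Real.rpow_mul (by norm_num)]
          norm_num
      _ ≤ _ := this
  have hxr : x + 1 ≤ x ^ (3/2 : ℝ) := by
    have : x ^ (3/2 : ℝ) = x * x ^ (1/2 : ℝ) := by
      rw [show (3/2 : ℝ) = 1 + 1/2 by norm_num, Real.rpow_add hp0, Real.rpow_one]
    rw [this]
    nlinarith
  have hlog : Real.log (x + 1) ≤ 3/2 * Real.log x := by
    calc Real.log (x + 1) ≤ Real.log (x ^ (3/2 : ℝ)) :=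
          Real.log_le_log (by linarith) hxr
      _ = 3/2 * Real.log x := Real.log_rpow hp0 _
  -- (x+1)^σ ≤ 4/3 * x^σ
  have hpow : (x + 1) ^ σ ≤ 4/3 * x ^ σ := by
    have h1 : x + 1 = x * (1 + 1/x) := by field_simp
    have h2 : (x + 1) ^ σ = x ^ σ * (1 + 1/x) ^ σ := by
      rw [h1, Real.mul_rpow hp0.le (by positivity)]
    have h3 : (1 + 1/x : ℝ) ≤ Real.exp (1/x) := by
      have := Real.add_one_le_exp (1/x); linarith
    have h4 : (1 + 1/x : ℝ) ^ σ ≤ (Real.exp (1/x)) ^ σ :=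
      Real.rpow_le_rpow (by positivity) h3 hσ0.le
    have h5 : (Real.exp (1/x)) ^ σ = Real.exp (σ / x) := by
      rw [← Real.exp_mul, mul_comm, mul_one_div]
    have h6 : Real.exp (σ / x) ≤ Real.exp (1/4 : ℝ) := by
      apply Real.exp_le_exp.mpr
      rw [div_le_iff₀ hp0]
      nlinarith
    have h7 : Real.exp (1/4 : ℝ) ≤ 4/3 := by
      have h8 : (3/4 : ℝ) ≤ Real.exp (-(1/4)) := by
        have := Real.add_one_le_exp (-(1/4) : ℝ); linarith
      have h9 : Real.exp (1/4 : ℝ) * Real.exp (-(1/4)) = 1 := by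
        rw [← Real.exp_add]; norm_num
      nlinarith [Real.exp_pos (1/4 : ℝ)]
    have hxσ : 0 ≤ x ^ σ := by positivity
    calc (x + 1) ^ σ = x ^ σ * (1 + 1/x) ^ σ := h2
      _ ≤ x ^ σ * (4/3) := by
          apply mul_le_mul_of_nonneg_left _ hxσ
          linarith
      _ = 4/3 * x ^ σ := by ring
  -- combine
  rw [Real.rpow_def_of_pos (by linarith), Real.rpow_def_of_pos hp0]
  apply Real.exp_le_exp.mpr
  have hxs1 : 0 ≤ (x + 1) ^ σ := by positivity
  calc Real.log (x + 1) * (τ * (x + 1) ^ σ)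
      ≤ (3/2 * Real.log x) * (τ * (x + 1) ^ σ) := by
        apply mul_le_mul_of_nonneg_right hlog; positivity
    _ ≤ (3/2 * Real.log x) * (τ * (4/3 * x ^ σ)) := by
        apply mul_le_mul_of_nonneg_left _ (by positivity)
        exact mul_le_mul_of_nonneg_left hpow hτ.le
    _ = Real.log x * (2 * τ * x ^ σ) := by ring

theorem condition_M2' (τ σ : ℝ) (hτ : 0 < τ) (hσ : 1 < σ) :
    ∃ C : ℝ, 0 < C ∧ ∃ h : ℝ, 0 < h ∧
      ∀ p : ℕ, M τ σ (p + 1) ≤ C * h ^ p * M (2 * τ) σ p := by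
  have hσ0 : 0 < σ := lt_trans one_pos hσ
  set N : ℕ := max 4 ⌈4 * σ⌉₊ with hN
  set C : ℝ := 1 + ∑ k ∈ Finset.range N, M τ σ (k + 1) with hCdef
  have hsum : 0 ≤ ∑ k ∈ Finset.range N, M τ σ (k + 1) :=
    Finset.sum_nonneg fun k _ => M_nonneg τ σ (k + 1)
  have hC : 0 < C := by rw [hCdef]; linarith
  have hC1 : 1 ≤ C := by rw [hCdef]; linarith
  refine ⟨C, hC, 1, one_pos, fun p => ?_⟩
  have hMp : 1 ≤ M (2 * τ) σ p := M_one_le _ _ (by linarith) hσ0 p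
  rcases lt_or_ge p N with hp | hp
  · have hle : M τ σ (p + 1) ≤ ∑ k ∈ Finset.range N, M τ σ (k + 1) :=
      Finset.single_le_sum (fun k _ => M_nonneg τ σ (k + 1)) (Finset.mem_range.mpr hp)
    calc M τ σ (p + 1) ≤ C := by rw [hCdef]; linarith
      _ = C * 1 ^ p * 1 := by rw [one_pow]; ring
      _ ≤ C * 1 ^ p * M (2 * τ) σ p := by
          apply mul_le_mul_of_nonneg_left hMp
          rw [one_pow]; linarith
  · have hp4 : (4:ℝ) ≤ (p:ℝ) := by
      have : 4 ≤ p := le_trans (le_max_left _ _) hp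
      exact_mod_cast this
    have hps : 4 * σ ≤ (p:ℝ) := by
      have h1 : ⌈4 * σ⌉₊ ≤ p := le_trans (le_max_right _ _) hp
      calc 4 * σ ≤ (⌈4 * σ⌉₊ : ℝ) := Nat.le_ceil _
        _ ≤ (p:ℝ) := by exact_mod_cast h1
    calc M τ σ (p + 1) ≤ M (2 * τ) σ p := tail_bound τ σ hτ hσ p hp4 hps
      _ = 1 * 1 ^ p * M (2 * τ) σ p := by rw [one_pow]; ring
      _ ≤ C * 1 ^ p * M (2 * τ) σ p := by
          apply mul_le_mul_of_nonneg_right _ (M_nonneg _ _ _)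
          rw [one_pow]; linarith
end

section
/- For all x ≥ e, the principal branch of the Lambert W function satisfies ln x − ln(ln x) ≤ W(x) ≤ ln x − (1/2) ln(ln x), with equality in both bounds if and only if x = e. -/
theorem lambertW_log_bounds (W : ℝ → ℝ)
    (hW : ∀ x : ℝ, 0 ≤ x → 0 ≤ W x ∧ W x * Real.exp (W x) = x) :
    ∀ x : ℝ, Real.exp 1 ≤ x →
      (Real.log x - Real.log (Real.log x) ≤ W x ∧
        W x ≤ Real.log x - (1 / 2) * Real.log (Real.log x)) ∧
      (Real.log x - Real.log (Real.log x) = W x ↔ x = Real.exp 1) ∧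
      (W x = Real.log x - (1 / 2) * Real.log (Real.log x) ↔ x = Real.exp 1) := by
  intro x hx
  have hx0 : (0:ℝ) ≤ x := le_trans (Real.exp_pos 1).le hx
  obtain ⟨hw0, hwe⟩ := hW x hx0
  set w := W x with hwdef
  have hw1 : 1 ≤ w := by
    by_contra h
    push_neg at h
    have h1 : w * Real.exp w < Real.exp 1 := by
      have he : Real.exp w < Real.exp 1 := Real.exp_lt_exp.mpr h
      nlinarith [Real.exp_pos w]
    rw [hwe] at h1
    linarith
  have hwpos : 0 < w := lt_of_lt_of_le one_pos hw1
  have hlogx : Real.log x = w + Real.log w := by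
    rw [← hwe, Real.log_mul (ne_of_gt hwpos) (Real.exp_ne_zero w), Real.log_exp]
    ring
  have hlw0 : 0 ≤ Real.log w := Real.log_nonneg hw1
  have hsum : 0 < w + Real.log w := by linarith
  have hloglogx : Real.log (Real.log x) = Real.log (w + Real.log w) := by rw [hlogx]
  -- lower bound
  have hlow : Real.log x - Real.log (Real.log x) ≤ w := by
    rw [hlogx]
    have : Real.log w ≤ Real.log (w + Real.log w) :=
      Real.log_le_log hwpos (by linarith)
    linarith
  -- upper bound
  have hlogle : Real.log w ≤ w - 1 := Real.log_le_sub_one_of_pos hwpos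
  have hsumle : w + Real.log w ≤ w ^ 2 := by nlinarith
  have hlogsq : Real.log (w ^ 2) = 2 * Real.log w := by
    rw [Real.log_pow]; push_cast; ring
  have hup : w ≤ Real.log x - (1 / 2) * Real.log (Real.log x) := by
    rw [hlogx]
    have h2 : Real.log (w + Real.log w) ≤ Real.log (w ^ 2) :=
      Real.log_le_log hsum hsumle
    rw [hlogsq] at h2
    linarith
  -- w = 1 when x = exp 1
  have hweq : x = Real.exp 1 → w = 1 := by
    intro hxe
    by_contra hne
    rcases lt_or_gt_of_ne hne with h | h
    · have he : Real.exp w < Real.exp 1 := Real.exp_lt_exp.mpr h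
      nlinarith [Real.exp_pos w, hwe, hxe ▸ hwe]
    · have he : Real.exp 1 < Real.exp w := Real.exp_lt_exp.mpr h
      have : Real.exp 1 < w * Real.exp w := by nlinarith [Real.exp_pos 1]
      rw [hwe, ← hxe] at this
      exact lt_irrefl _ this
  have hxe_vals : x = Real.exp 1 →
      Real.log x = 1 ∧ Real.log (Real.log x) = 0 := by
    intro hxe
    rw [hxe, Real.log_exp]
    exact ⟨rfl, Real.log_one⟩
  refine ⟨⟨hlow, hup⟩, ⟨?_, ?_⟩, ⟨?_, ?_⟩⟩
  · intro heq
    -- log (w + log w) = log w, hence log w = 0, w = 1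
    rw [hlogx] at heq
    have hlweq : Real.log w = 0 := by
      by_contra hne
      have hlwpos : 0 < Real.log w := lt_of_le_of_ne hlw0 (Ne.symm hne)
      have : Real.log w < Real.log (w + Real.log w) :=
        Real.log_lt_log hwpos (by linarith)
      linarith
    have hw1' : w = 1 := by
      have := Real.exp_log hwpos
      rw [hlweq, Real.exp_zero] at this
      linarith
    rw [← hwe, hw1']
    ring
  · intro hxe
    obtain ⟨h1, h2⟩ := hxe_vals hxe
    rw [h2, h1, hweq hxe]
    norm_num
  · intro heq
    rw [hlogx] at heq
    have h2 : Real.log (w + Real.log w) = 2 * Real.log w := by linarith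
    have hw1' : w = 1 := by
      by_contra hne
      have hgt : 1 < w := lt_of_le_of_ne hw1 (Ne.symm hne)
      have hstrict : Real.log w < w - 1 :=
        Real.log_lt_sub_one_of_pos hwpos hne
      have hlt : w + Real.log w < w ^ 2 := by nlinarith
      have : Real.log (w + Real.log w) < Real.log (w ^ 2) :=
        Real.log_lt_log hsum hlt
      rw [hlogsq] at this
      linarith
    rw [← hwe, hw1']
    ring
  · intro hxe
    obtain ⟨h1, h2⟩ := hxe_vals hxe
    rw [h2, h1, hweq hxe]
    norm_num
end
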